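/- arXiv:1102.4639 — 2 statements merged into one kernel-verified Lean document; each statement's English description precedes it below -/
import Mathlib

section
/- One step of the Approximate-Centrality update preserves the invariant: if c̃r = cr(s - r), and we update c̃r' = c̃r + r(u)·e_u and r' = r - r(u)·e_u + α·r(u)·e_u·A (for any vertex u), then c̃r' = cr(s - r'). -/
open Matrix

/-! Writing B = 1 - αA, the invariant says c̃r · B = s - r, and the update adds v := r(u)·e_u to c̃r
while subtracting v · B = v - α v A from r; B is invertible because α⁻¹ lies outside the
spectrum of A. -/

theorem isUnit_one_sub_smul_of_enorm_mul_spectralRadius_lt_one {𝕜 A : Type*} [NormedField 𝕜]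
    [Ring A] [Algebra 𝕜 A] {a : A} {z : 𝕜} (h : ‖z‖ₑ * spectralRadius 𝕜 a < 1) :
    IsUnit (1 - z • a) := by
  obtain rfl | hz := eq_or_ne z 0
  · simp
  let u := Units.mk0 z hz
  suffices hu : IsUnit (u⁻¹ • (1 : A) - a) by
    rwa [IsUnit.smul_sub_iff_sub_inv_smul, inv_inv u] at hu
  rw [Units.smul_def, ← Algebra.algebraMap_eq_smul_one, ← spectrum.mem_resolventSet_iff]
  refine spectrum.mem_resolventSet_of_spectralRadius_lt ?_
  rw [Units.val_inv_eq_inv_val, Units.val_mk0, nnnorm_inv, ENNReal.coe_inv (by simpa using hz),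
    ← one_div, ENNReal.lt_div_iff_mul_lt (by simp [hz]) (by simp), mul_comm]
  exact h

theorem Matrix.vecMul_nonsing_inv_add {m R : Type*} [Fintype m] [DecidableEq m] [CommRing R]
    {B : Matrix m m R} (hB : IsUnit B) (x v : m → R) :
    x ᵥ* B⁻¹ + v = (x + v ᵥ* B) ᵥ* B⁻¹ := by
  rw [add_vecMul, vecMul_vecMul, mul_nonsing_inv B ((isUnit_iff_isUnit_det B).mp hB), vecMul_one]

theorem approximate_centrality_loop_invariant_general
    (n : ℕ) (A : Matrix (Fin n) (Fin n) ℝ) (α : ℝ)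
    (hρ : ENNReal.ofReal |α| * spectralRadius ℝ A < 1)
    (cr : (Fin n → ℝ) → (Fin n → ℝ))
    (hcr : ∀ x, cr x = x ᵥ* ((1 : Matrix (Fin n) (Fin n) ℝ) - α • A)⁻¹)
    (s r tcr : Fin n → ℝ) (u : Fin n)
    (eu : Fin n → ℝ)
    (hinv : tcr = cr (s - r))
    (tcr' r' : Fin n → ℝ)
    (htcr' : tcr' = tcr + r u • eu)
    (hr' : r' = r - r u • eu + α • ((r u • eu) ᵥ* A)) :
    tcr' = cr (s - r') := by
  have hB : IsUnit (1 - α • A) :=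
    isUnit_one_sub_smul_of_enorm_mul_spectralRadius_lt_one (by rwa [Real.enorm_eq_ofReal_abs])
  have hsub : s - r' = (s - r) + (r u • eu) ᵥ* (1 - α • A) := by
    rw [hr', vecMul_sub, vecMul_one, vecMul_smul]
    abel
  rw [htcr', hinv, hcr, hcr, hsub, vecMul_nonsing_inv_add hB]

/-- one step of Approximate-Centrality preserves the invariant
c̃r = cr(s - r). -/
theorem approximate_centrality_loop_invariant
    (n : ℕ) (A : Matrix (Fin n) (Fin n) ℝ) (α : ℝ)
    (hρ : ENNReal.ofReal |α| * spectralRadius ℝ A < 1)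
    (cr : (Fin n → ℝ) → (Fin n → ℝ))
    (hcr : ∀ x, cr x = x ᵥ* ((1 : Matrix (Fin n) (Fin n) ℝ) - α • A)⁻¹)
    (s r tcr : Fin n → ℝ) (u : Fin n)
    (eu : Fin n → ℝ) (heu : eu = Pi.single u (1 : ℝ))
    (hinv : tcr = cr (s - r))
    (tcr' r' : Fin n → ℝ)
    (htcr' : tcr' = tcr + r u • eu)
    (hr' : r' = r - r u • eu + α • ((r u • eu) ᵥ* A)) :
    tcr' = cr (s - r') :=
  approximate_centrality_loop_invariant_general n A α hρ cr hcr s r tcr u eu hinv tcr' r' htcr' hr'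
end

section
/- Error bound from residual: if c̃r = cr(s) - cr(r) where A is entrywise nonnegative, 0 ≤ α with α·ρ(A) < 1, and the residual satisfies 0 ≤ r(u) ≤ δ·s(u) for all u with 0 < δ ≤ 1 and s entrywise positive, then for every vertex u: cr(s)(u) ≥ c̃r(u) ≥ (1-δ)·cr(s)(u). -/
/-!
With `N = (1 - α • A)⁻¹`, both inequalities say that `N` maps the nonnegative row vectors `r` and
`δ • s - r` to nonnegative vectors, so it suffices that `N` is entrywise nonnegative.

Since `α ρ(A) < 1`, the matrix `1 - t • A` is invertible for every `t ∈ [0, α]`, so the set of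
those `t` for which `(1 - t • A)⁻¹ ≥ 0` is closed in `[0, α]`; it contains `0`. It is also open
to the right: if `M = 1 - t • A` has a nonnegative inverse, then
`1 - t' • A = (1 - (t' - t) • A M⁻¹) M`, and for `t' - t` small the first factor obeys a minimum
principle (if `x (1 - h C) ≥ 0`, with `C ≥ 0` and `h` times each column sum of `C` below `1`,
then the smallest coordinate of `x` is nonnegative). Continuous induction reaches `t = α`.
-/

open Matrix Filter Topology Set

lemma isUnit_one_sub_smul_of_ofReal_mul_spectralRadius_lt_one {A : Type*} [Ring A] [Algebra ℝ A]
    {a : A} {t : ℝ} (ht : 0 ≤ t) (hρ : ENNReal.ofReal t * spectralRadius ℝ a < 1) :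
    IsUnit (1 - t • a) := by
  rcases ht.eq_or_lt with rfl | ht
  · simp
  have hρ' : spectralRadius ℝ a < ‖t⁻¹‖₊ := by
    rw [← enorm_eq_nnnorm, Real.enorm_eq_ofReal (inv_nonneg.2 ht.le), ENNReal.ofReal_inv_of_pos ht,
      ← one_div, ENNReal.lt_div_iff_mul_lt (Or.inl (ENNReal.ofReal_pos.2 ht).ne')
        (Or.inl ENNReal.ofReal_ne_top), mul_comm]
    exact hρ
  have hres := spectrum.mem_resolventSet_iff.1 (spectrum.mem_resolventSet_of_spectralRadius_lt hρ')
  convert ((isUnit_iff_ne_zero.2 ht.ne').map (algebraMap ℝ A)).mul hres using 1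
  rw [← Algebra.smul_def, smul_sub, Algebra.algebraMap_eq_smul_one, smul_smul,
    mul_inv_cancel₀ ht.ne', one_smul]

namespace Matrix

section

variable {l m n : Type*} [Fintype m]

lemma vecMul_nonneg {M : Matrix m n ℝ} (hM : ∀ i j, 0 ≤ M i j) {x : m → ℝ} (hx : 0 ≤ x) :
    0 ≤ x ᵥ* M :=
  fun j => Finset.sum_nonneg fun i _ => mul_nonneg (hx i) (hM i j)

lemma mul_apply_nonneg {M : Matrix l m ℝ} {N : Matrix m n ℝ} (hM : ∀ i j, 0 ≤ M i j)
    (hN : ∀ i j, 0 ≤ N i j) (i : l) (j : n) : 0 ≤ (M * N) i j :=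
  Finset.sum_nonneg fun k _ => mul_nonneg (hM i k) (hN k j)

end

variable {ι : Type*} [Fintype ι] [DecidableEq ι]

lemma nonneg_of_nonneg_vecMul_one_sub_smul {C : Matrix ι ι ℝ} (hC : ∀ i j, 0 ≤ C i j) {h : ℝ}
    (hh : 0 ≤ h) (hsmall : ∀ j, h * ∑ i, C i j < 1) {x : ι → ℝ}
    (hx : 0 ≤ x ᵥ* (1 - h • C)) : 0 ≤ x := by
  intro k
  have : Nonempty ι := ⟨k⟩
  obtain ⟨j, hj⟩ := Finite.exists_min x
  suffices 0 ≤ x j from this.trans (hj k)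
  have hxj : h * (x ᵥ* C) j ≤ x j := by
    simpa only [vecMul_sub, vecMul_one, vecMul_smul, Pi.sub_apply, Pi.smul_apply, smul_eq_mul,
      Pi.zero_apply, sub_nonneg] using hx j
  have hmin : x j * ∑ i, C i j ≤ (x ᵥ* C) j := by
    rw [Finset.mul_sum]
    exact Finset.sum_le_sum fun i _ => mul_le_mul_of_nonneg_right (hj i) (hC i j)
  nlinarith [hsmall j, mul_le_mul_of_nonneg_left hmin hh]

lemma isUnit_det_and_inv_nonneg {P : Matrix ι ι ℝ} (hP : ∀ x, 0 ≤ x ᵥ* P → 0 ≤ x) :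
    IsUnit P.det ∧ ∀ i j, 0 ≤ P⁻¹ i j := by
  have hdet : IsUnit P.det := by
    refine isUnit_iff_ne_zero.2 fun h => ?_
    obtain ⟨v, hv, hvP⟩ := exists_vecMul_eq_zero_iff.2 h
    have hpos : 0 ≤ v := hP v hvP.ge
    have hneg : 0 ≤ -v := hP (-v) (by rw [neg_vecMul, hvP, neg_zero])
    exact hv (le_antisymm (neg_nonneg.1 hneg) hpos)
  refine ⟨hdet, fun i j => ?_⟩
  have hrow : 0 ≤ Pi.single i 1 ᵥ* P⁻¹ := hP _ <| by
    rw [vecMul_vecMul, nonsing_inv_mul P hdet, vecMul_one]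
    exact Pi.single_nonneg.2 zero_le_one
  simpa [single_one_vecMul] using hrow j

lemma eventually_inv_one_sub_smul_nonneg {A : Matrix ι ι ℝ} (hA : ∀ i j, 0 ≤ A i j) {t : ℝ}
    (ht : IsUnit (1 - t • A).det) (hinv : ∀ i j, 0 ≤ (1 - t • A)⁻¹ i j) :
    ∀ᶠ t' in 𝓝[≥] t, ∀ i j, 0 ≤ (1 - t' • A)⁻¹ i j := by
  set M := 1 - t • A
  set C := A * M⁻¹
  have hC : ∀ i j, 0 ≤ C i j := mul_apply_nonneg hA hinv
  have hsmall : ∀ᶠ t' in 𝓝 t, ∀ j, (t' - t) * ∑ i, C i j < 1 :=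
    eventually_all.2 fun j => ContinuousAt.eventually_lt (by fun_prop) continuousAt_const
      (by simp)
  filter_upwards [self_mem_nhdsWithin, nhdsWithin_le_nhds hsmall] with t' htt' ht'
  refine (isUnit_det_and_inv_nonneg fun x hx => ?_).2
  have hfactor : (1 - t' • A) * M⁻¹ = 1 - (t' - t) • C := by
    have : 1 - t' • A = M - (t' - t) • A := by simp only [M, sub_smul]; abel
    rw [this, sub_mul, mul_nonsing_inv M ht, smul_mul_assoc]
  refine nonneg_of_nonneg_vecMul_one_sub_smul hC (sub_nonneg.2 htt') ht' ?_
  rw [← hfactor, ← vecMul_vecMul]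
  exact vecMul_nonneg hinv hx

lemma inv_one_sub_smul_nonneg {A : Matrix ι ι ℝ} (hA : ∀ i j, 0 ≤ A i j) {α : ℝ} (hα : 0 ≤ α)
    (hunit : ∀ t ∈ Icc 0 α, IsUnit (1 - t • A).det) (i j : ι) :
    0 ≤ (1 - α • A)⁻¹ i j := by
  set S := {t : ℝ | ∀ i j, 0 ≤ (1 - t • A)⁻¹ i j}
  have hcont : ContinuousOn (fun t : ℝ => (1 - t • A)⁻¹) (Icc 0 α) := fun t ht =>
    (continuousAt_matrix_inv _ (by
      rw [Ring.inverse_eq_inv']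
      exact continuousAt_inv₀ (hunit t ht).ne_zero)).comp_continuousWithinAt
      (by fun_prop)
  have hclosed : IsClosed (S ∩ Icc 0 α) := by
    have hnonneg : IsClosed {M : Matrix ι ι ℝ | ∀ i j, 0 ≤ M i j} := by
      simp only [ofPred_forall]
      exact isClosed_iInter fun i => isClosed_iInter fun j =>
        isClosed_le continuous_const (by fun_prop)
    rw [inter_comm]
    exact hcont.preimage_isClosed_of_isClosed isClosed_Icc hnonneg
  have h0 : (0 : ℝ) ∈ S := fun i j => by simp [one_apply]; positivity
  have hstep : ∀ t ∈ S ∩ Ico 0 α, S ∈ 𝓝[>] t := fun t ht =>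
    nhdsWithin_mono _ Ioi_subset_Ici_self
      (eventually_inv_one_sub_smul_nonneg hA (hunit t (Ico_subset_Icc_self ht.2)) ht.1)
  exact hclosed.Icc_subset_of_forall_mem_nhdsWithin h0 hstep ⟨hα, le_rfl⟩ i j

end Matrix

theorem approximate_centrality_error_bound_general
    (n : ℕ) (A : Matrix (Fin n) (Fin n) ℝ)
    (hA : ∀ i j, 0 ≤ A i j)
    (α : ℝ) (hα : 0 ≤ α)
    (hρ : ENNReal.ofReal α * spectralRadius ℝ A < 1)
    (cr : (Fin n → ℝ) → (Fin n → ℝ))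
    (hcr : ∀ x, cr x = x ᵥ* ((1 : Matrix (Fin n) (Fin n) ℝ) - α • A)⁻¹)
    (δ : ℝ)
    (s : Fin n → ℝ)
    (r : Fin n → ℝ) (hr0 : ∀ i, 0 ≤ r i) (hrδ : ∀ i, r i ≤ δ * s i)
    (tcr : Fin n → ℝ) (htcr : tcr = cr s - cr r) :
    ∀ u, cr s u ≥ tcr u ∧ tcr u ≥ (1 - δ) * cr s u := by
  have hunit : ∀ t ∈ Icc 0 α, IsUnit (1 - t • A).det := fun t ht =>
    (isUnit_iff_isUnit_det _).1 <| isUnit_one_sub_smul_of_ofReal_mul_spectralRadius_lt_one ht.1 <|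
      lt_of_le_of_lt (by gcongr; exact ht.2) hρ
  have hN := inv_one_sub_smul_nonneg hA hα hunit
  intro u
  have hr : 0 ≤ cr r u := by
    rw [hcr]
    exact vecMul_nonneg hN hr0 u
  have hδsr : 0 ≤ δ * cr s u - cr r u := by
    have := vecMul_nonneg hN (x := δ • s - r) fun i => by simpa using hrδ i
    simpa [hcr, sub_vecMul, smul_vecMul] using this u
  rw [htcr, Pi.sub_apply]
  constructor <;> linarith

/-- error bound of Approximate-Centrality from the residual. -/
theorem approximate_centrality_error_bound
    (n : ℕ) (A : Matrix (Fin n) (Fin n) ℝ)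
    (hA : ∀ i j, 0 ≤ A i j)
    (α : ℝ) (hα : 0 ≤ α)
    (hρ : ENNReal.ofReal α * spectralRadius ℝ A < 1)
    (cr : (Fin n → ℝ) → (Fin n → ℝ))
    (hcr : ∀ x, cr x = x ᵥ* ((1 : Matrix (Fin n) (Fin n) ℝ) - α • A)⁻¹)
    (δ : ℝ) (hδ0 : 0 < δ) (hδ1 : δ ≤ 1)
    (s : Fin n → ℝ) (hs : ∀ i, 0 < s i)
    (r : Fin n → ℝ) (hr0 : ∀ i, 0 ≤ r i) (hrδ : ∀ i, r i ≤ δ * s i)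
    (tcr : Fin n → ℝ) (htcr : tcr = cr s - cr r) :
    ∀ u, cr s u ≥ tcr u ∧ tcr u ≥ (1 - δ) * cr s u :=
  approximate_centrality_error_bound_general n A hA α hα hρ cr hcr δ s r hr0 hrδ tcr htcr
end
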